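/- For the expression E = ExtDist(a*b* + b*a*, b*a*b*, a*b*a*) over the LinComb(ℕ) support, the derivated terms with respect to powers of a are pairwise distinct: for every n ≥ 1, d_{aⁿ}(E) = ExtDist(a*b* + a*, a*b*, a*b*a* + n ⊙ a*) as a linear-combination expression, hence the set of derivated terms of E is infinite. -/

import Mathlib

/-- Monadic expressions over an alphabet `A` with scalars in `K`. -/
inductive MExp (A K : Type) : Type
  | sym : A → MExp A K
  | eps : MExp A K
  | empty : MExp A K
  | plus : MExp A K → MExp A K → MExp A K
  | times : MExp A K → MExp A K → MExp A K
  | star : MExp A K → MExp A K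
  | lact : K → MExp A K → MExp A K
  | ract : MExp A K → K → MExp A K
  | fn : (n : ℕ) → ((Fin n → K) → K) → (Fin n → MExp A K) → MExp A K

variable {A : Type}

/-- Cauchy product of series. -/
def cauchy (S₁ S₂ : List A → ℕ) : List A → ℕ :=
  fun w => ∑ i ∈ Finset.range (w.length + 1), S₁ (w.take i) * S₂ (w.drop i)

/-- Star of a series: sum over factorizations into nonempty factors. -/
def starSeries (S : List A → ℕ) : List A → ℕ
  | [] => 1
  | w => ∑ c : Composition w.length, ((w.splitWrtComposition c).map S).prod

/-- The ℕ-series associated with an expression. -/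
def MExp.series [DecidableEq A] : MExp A ℕ → List A → ℕ
  | .sym a, w => if w = [a] then 1 else 0
  | .eps, w => if w = [] then 1 else 0
  | .empty, _ => 0
  | .plus e₁ e₂, w => e₁.series w + e₂.series w
  | .times e₁ e₂, w => cauchy e₁.series e₂.series w
  | .star e, w => starSeries e.series w
  | .lact k e, w => k * e.series w
  | .ract e k, w => e.series w * k
  | .fn _ f es, w => f (fun i => (es i).series w)

/-- The nullability value over ℕ. -/
def MExp.null : MExp A ℕ → ℕ
  | .sym _ => 0
  | .eps => 1
  | .empty => 0
  | .plus e₁ e₂ => e₁.null + e₂.null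
  | .times e₁ e₂ => e₁.null * e₂.null
  | .star _ => 1
  | .lact k e => k * e.null
  | .ract e k => e.null * k
  | .fn _ f es => f (fun i => (es i).null)

/-- `toExp` of the `LinComb(ℕ)` support: `(k₁,E₁) ⊞ ⋯ ⊞ (kₙ,Eₙ) ↦ k₁⊙E₁ + ⋯ + kₙ⊙Eₙ`. -/
noncomputable def toExpLC (m : MExp A ℕ →₀ ℕ) : MExp A ℕ :=
  (m.support.toList.map (fun E => MExp.lact (m E) E)).foldr MExp.plus MExp.empty

/-- The monadic derivative over the `LinComb(ℕ)` support, w.r.t. a symbol. -/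
noncomputable def dLC [DecidableEq A] (a : A) : MExp A ℕ → (MExp A ℕ →₀ ℕ)
  | .sym b => if a = b then Finsupp.single MExp.eps 1 else 0
  | .eps => 0
  | .empty => 0
  | .plus e₁ e₂ => dLC a e₁ + dLC a e₂
  | .times e₁ e₂ =>
      Finsupp.mapDomain (fun E => E.times e₂) (dLC a e₁) + e₁.null • dLC a e₂
  | .star e => Finsupp.mapDomain (fun E => E.times (MExp.star e)) (dLC a e)
  | .lact α e => α • dLC a e
  | .ract e α => Finsupp.mapDomain (fun E => E.ract α) (dLC a e)
  | .fn n f es => Finsupp.single (MExp.fn n f (fun i => toExpLC (dLC a (es i)))) 1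

/-- The derivative w.r.t. a word: `d_ε(E) = pure E`, `d_{a·v}(E) = d_a(E) >>= d_v`. -/
noncomputable def dLCW [DecidableEq A] : List A → MExp A ℕ → (MExp A ℕ →₀ ℕ)
  | [], E => Finsupp.single E 1
  | a :: v, E => (dLC a E).sum fun E' k => k • dLCW v E'

/-- `ExtDist(x₁,x₂,x₃) = max(x₁,x₂,x₃) − min(x₁,x₂,x₃)` (truncated subtraction on ℕ). -/
def extDist (x : Fin 3 → ℕ) : ℕ :=
  max (x 0) (max (x 1) (x 2)) - min (x 0) (min (x 1) (x 2))

open MExp in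
/-- `E = ExtDist(a*b* + b*a*, b*a*b*, a*b*a*)` over the alphabet `{a, b}`
(here `a = 0`, `b = 1` in `Fin 2`). -/
def Eex : MExp (Fin 2) ℕ :=
  fn 3 extDist
    ![plus (times (star (sym 0)) (star (sym 1))) (times (star (sym 1)) (star (sym 0))),
      times (star (sym 1)) (times (star (sym 0)) (star (sym 1))),
      times (star (sym 0)) (times (star (sym 1)) (star (sym 0)))]

open MExp in
/-- `ExtDist(a*b* + a*, a*b*, a*b*a* + n ⊙ a*)`, the expected derivated term of `E`
w.r.t. `aⁿ`. -/
def Dn (n : ℕ) : MExp (Fin 2) ℕ :=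
  fn 3 extDist
    ![plus (times (star (sym 0)) (star (sym 1))) (star (sym 0)),
      times (star (sym 0)) (star (sym 1)),
      plus (times (star (sym 0)) (times (star (sym 1)) (star (sym 0))))
        (lact n (star (sym 0)))]


/-!
Up to `ε` factors, which do not change the denoted series, the first `a` turns `E` into
`ExtDist(a*b* + a*, a*b*, a*b*a* + a*)`, and every further `a` fixes `a*b*` and `a*` and adds one
more copy of `a*` to the third argument (`d_a(a*b*a*) = ε·a*·b*a* + ε·a*`). So `d_{aⁿ}(E)` is a
single term denoting the series of `ExtDist(a*b* + a*, a*b*, a*b*a* + n ⊙ a*)`, whose value at the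
empty word is `ExtDist(2, 1, n + 1) = n`.
-/

open MExp Finsupp

section General

variable [DecidableEq A]

lemma dLC_foldr_plus (a : A) (l : List (MExp A ℕ)) :
    dLC a (l.foldr plus empty) = (l.map (dLC a)).sum := by
  induction l with
  | nil => simp [dLC]
  | cons E l ih => simp [dLC, ih]

lemma dLC_toExpLC (a : A) (m : MExp A ℕ →₀ ℕ) :
    dLC a (toExpLC m) = m.sum fun E k => k • dLC a E := by
  rw [toExpLC, dLC_foldr_plus, List.map_map, Finsupp.sum, ← Finset.sum_map_toList]
  simp [Function.comp_def, dLC]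

lemma series_foldr_plus (l : List (MExp A ℕ)) (w : List A) :
    (l.foldr plus empty).series w = (l.map fun E => E.series w).sum := by
  induction l with
  | nil => simp [series]
  | cons E l ih => simp [series, ih]

lemma series_toExpLC (m : MExp A ℕ →₀ ℕ) (w : List A) :
    (toExpLC m).series w = m.sum fun E k => k * E.series w := by
  rw [toExpLC, series_foldr_plus, List.map_map, Finsupp.sum, ← Finset.sum_map_toList]
  simp [Function.comp_def, series]

lemma series_toExpLC_single (E : MExp A ℕ) (k : ℕ) (w : List A) :
    (toExpLC (single E k)).series w = k * E.series w := by
  rw [series_toExpLC, sum_single_index (zero_mul _)]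

lemma series_toExpLC_single_add_single (E₁ E₂ : MExp A ℕ) (k₁ k₂ : ℕ) (w : List A) :
    (toExpLC (single E₁ k₁ + single E₂ k₂)).series w = k₁ * E₁.series w + k₂ * E₂.series w := by
  rw [series_toExpLC, sum_add_index' (fun _ => zero_mul _) (fun _ _ _ => add_mul _ _ _),
    sum_single_index (zero_mul _), sum_single_index (zero_mul _)]

lemma series_eps_times (e : MExp A ℕ) : (times eps e).series = e.series := by
  funext w
  cases w with
  | nil => simp [series, cauchy]
  | cons x w =>
    rw [series, cauchy, Finset.sum_eq_single 0 (fun i _ hi => by simp [series, hi]) (by simp)]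
    simp [series]

lemma series_eps_times_times (e f : MExp A ℕ) :
    (times (times eps e) f).series = (times e f).series := by
  funext w
  change cauchy (times eps e).series f.series w = cauchy e.series f.series w
  rw [series_eps_times]

lemma dLCW_cons_of_dLC_eq_single {a : A} {E E' : MExp A ℕ} (h : dLC a E = single E' 1)
    (v : List A) : dLCW (a :: v) E = dLCW v E' := by
  rw [dLCW, h, sum_single_index (zero_smul ℕ (dLCW v E')), one_smul]

lemma dLCW_replicate_of_dLC_eq_single {a : A} {G : ℕ → MExp A ℕ}
    (h : ∀ n, dLC a (G n) = single (G (n + 1)) 1) (k n : ℕ) :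
    dLCW (List.replicate k a) (G n) = single (G (n + k)) 1 := by
  induction k generalizing n with
  | zero => rfl
  | succ k ih =>
    rw [List.replicate_succ, dLCW_cons_of_dLC_eq_single (h n), ih, Nat.add_right_comm,
      Nat.add_assoc]

end General

section Example

def epsAStar : MExp (Fin 2) ℕ := times eps (star (sym 0))

def epsAStarBStar : MExp (Fin 2) ℕ := times epsAStar (star (sym 1))

def epsAStarBStarAStar : MExp (Fin 2) ℕ := times epsAStar (times (star (sym 1)) (star (sym 0)))

/-- `Dn n` as the derivative actually produces it, with leftover `ε` factors. -/
noncomputable def derivTerm (n : ℕ) : MExp (Fin 2) ℕ :=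
  fn 3 extDist
    ![toExpLC (single epsAStarBStar 1 + single epsAStar 1),
      toExpLC (single epsAStarBStar 1),
      toExpLC (single epsAStarBStarAStar 1 + single epsAStar n)]

lemma series_epsAStar : epsAStar.series = (star (sym 0)).series :=
  series_eps_times _

lemma series_epsAStarBStar : epsAStarBStar.series = (times (star (sym 0)) (star (sym 1))).series :=
  series_eps_times_times _ _

lemma series_epsAStarBStarAStar :
    epsAStarBStarAStar.series = (times (star (sym 0)) (times (star (sym 1)) (star (sym 0)))).series :=
  series_eps_times_times _ _

lemma dLC_epsAStar : dLC 0 epsAStar = single epsAStar 1 := by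
  simp [epsAStar, dLC, null]

lemma dLC_epsAStarBStar : dLC 0 epsAStarBStar = single epsAStarBStar 1 := by
  simp [epsAStarBStar, epsAStar, dLC, null]

lemma dLC_epsAStarBStarAStar :
    dLC 0 epsAStarBStarAStar = single epsAStarBStarAStar 1 + single epsAStar 1 := by
  simp [epsAStarBStarAStar, epsAStar, dLC, null]

lemma dLC_Eex : dLC 0 Eex = single (derivTerm 1) 1 := by
  rw [Eex, dLC, derivTerm]
  congr 3
  funext i
  fin_cases i <;> simp [dLC, null, epsAStarBStarAStar, epsAStarBStar, epsAStar]

lemma dLC_derivTerm (n : ℕ) : dLC 0 (derivTerm n) = single (derivTerm (n + 1)) 1 := by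
  rw [derivTerm, dLC, derivTerm]
  congr 3
  funext i
  fin_cases i <;>
    simp [dLC_toExpLC, sum_add_index', add_smul, smul_single, dLC_epsAStar, dLC_epsAStarBStar,
      dLC_epsAStarBStarAStar]
  rw [add_assoc, add_comm (single epsAStar 1)]

lemma dLCW_replicate_Eex {n : ℕ} (hn : 1 ≤ n) :
    dLCW (List.replicate n 0) Eex = single (derivTerm n) 1 := by
  obtain ⟨k, rfl⟩ := Nat.exists_eq_add_of_le' hn
  rw [List.replicate_succ, dLCW_cons_of_dLC_eq_single dLC_Eex,
    dLCW_replicate_of_dLC_eq_single dLC_derivTerm, Nat.add_comm]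

lemma series_derivTerm (n : ℕ) : (derivTerm n).series = (Dn n).series := by
  funext w
  rw [derivTerm, Dn, series, series]
  congr 1
  funext i
  fin_cases i <;>
    simp [series_toExpLC_single_add_single, series_toExpLC_single, series_epsAStar,
      series_epsAStarBStar, series_epsAStarBStarAStar] <;> rfl

lemma series_toExpLC_dLCW_replicate_Eex {n : ℕ} (hn : 1 ≤ n) :
    (toExpLC (dLCW (List.replicate n 0) Eex)).series = (Dn n).series := by
  funext w
  rw [dLCW_replicate_Eex hn, series_toExpLC_single, one_mul, series_derivTerm]

lemma series_Dn_nil {n : ℕ} (hn : 1 ≤ n) : (Dn n).series [] = n := by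
  simp only [Dn, series, extDist]
  norm_num [series, cauchy, starSeries, Matrix.cons_val_zero, Matrix.cons_val_one,
    Matrix.cons_val_two, Matrix.tail_cons, Matrix.head_cons]
  omega

lemma eq_of_series_Dn_eq {m n : ℕ} (hm : 1 ≤ m) (hn : 1 ≤ n) (h : (Dn m).series = (Dn n).series) :
    m = n := by
  simpa [series_Dn_nil hm, series_Dn_nil hn] using congrFun h []

end Example

/-- For `E = ExtDist(a*b* + b*a*, b*a*b*, a*b*a*)` over the `LinComb(ℕ)` support, for
every `n ≥ 1` the derivated term w.r.t. `aⁿ` denotes the same ℕ-series as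
`ExtDist(a*b* + a*, a*b*, a*b*a* + n ⊙ a*)`; these are pairwise distinct (their denoted
ℕ-series differ), hence the set of (series of) derivated terms of `E` is infinite. -/
theorem derivated_terms_infinite :
    (∀ n : ℕ, 1 ≤ n → ∀ w : List (Fin 2),
      (toExpLC (dLCW (List.replicate n 0) Eex)).series w = (Dn n).series w) ∧
    (∀ m n : ℕ, 1 ≤ m → 1 ≤ n → m ≠ n →
      (fun w => (toExpLC (dLCW (List.replicate m 0) Eex)).series w)
        ≠ (fun w => (toExpLC (dLCW (List.replicate n 0) Eex)).series w)) ∧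
    Set.Infinite
      {S : List (Fin 2) → ℕ |
        ∃ w : List (Fin 2), S = fun w' => (toExpLC (dLCW w Eex)).series w'} := by
  have hseries := @series_toExpLC_dLCW_replicate_Eex
  refine ⟨fun n hn w => congrFun (hseries hn) w, fun m n hm hn hmn h => ?_, ?_⟩
  · exact hmn (eq_of_series_Dn_eq hm hn (by rwa [← hseries hm, ← hseries hn]))
  · refine Set.infinite_of_injective_forall_mem
      (f := fun n => (toExpLC (dLCW (List.replicate (n + 1) 0) Eex)).series)
      (fun m n h => ?_) fun n => ⟨List.replicate (n + 1) 0, rfl⟩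
    have := eq_of_series_Dn_eq (Nat.le_add_left 1 m) (Nat.le_add_left 1 n)
      (by rwa [← hseries (Nat.le_add_left 1 m), ← hseries (Nat.le_add_left 1 n)])
    omega
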